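/- arXiv:2003.07612 — 4 statements merged into one kernel-verified Lean document; each statement's English description precedes it below -/
import Mathlib

section
/- Let g: ℝⁿ → ℝ̄ be proper, ρ-weakly convex, and lower semicontinuous, and μ ∈ (0, ρ⁻¹). Then the gradient of the Moreau envelope g_μ is Lipschitz continuous with constant max{μ⁻¹, ρ/(1 − ρμ)}. -/
noncomputable section
open Filter Metric Set

/-- Euclidean space ℝⁿ. -/
abbrev En (n : ℕ) := EuclideanSpace ℝ (Fin n)

/-- A proper extended-real-valued function: never `⊥` and not identically `⊤`. -/
def ProperFn {n : ℕ} (g : En n → EReal) : Prop := (∀ x, g x ≠ ⊥) ∧ ∃ x, g x ≠ ⊤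

/-- ρ-weak convexity for extended-real-valued functions: `g + (ρ/2)‖·‖²` is convex. -/
def WeaklyConvexE {n : ℕ} (ρ : ℝ) (g : En n → EReal) : Prop :=
  ∀ x y : En n, ∀ t : ℝ, 0 ≤ t → t ≤ 1 →
    g (t • x + (1 - t) • y) + (((ρ / 2) * ‖t • x + (1 - t) • y‖ ^ 2 : ℝ) : EReal)
      ≤ (t : EReal) * (g x + (((ρ / 2) * ‖x‖ ^ 2 : ℝ) : EReal))
        + ((1 - t : ℝ) : EReal) * (g y + (((ρ / 2) * ‖y‖ ^ 2 : ℝ) : EReal))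

/-- m-strong convexity for extended-real-valued functions. -/
def StronglyConvexE {n : ℕ} (m : ℝ) (f : En n → EReal) : Prop :=
  ∀ x y : En n, ∀ t : ℝ, 0 ≤ t → t ≤ 1 →
    f (t • x + (1 - t) • y) + (((m / 2) * (t * (1 - t)) * ‖x - y‖ ^ 2 : ℝ) : EReal)
      ≤ (t : EReal) * f x + ((1 - t : ℝ) : EReal) * f y

/-- ρ-weak convexity, real-valued version: `g + (ρ/2)‖·‖²` is convex. -/
def WeaklyConvexR {n : ℕ} (ρ : ℝ) (g : En n → ℝ) : Prop :=
  ConvexOn ℝ Set.univ (fun x => g x + (ρ / 2) * ‖x‖ ^ 2)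

/-- `v` is a Fréchet subgradient of the extended-real-valued `g` at `x`:
`g y ≥ g x + ⟨v, y - x⟩ + o(‖y - x‖)` as `y → x`. -/
def FSubE {n : ℕ} (g : En n → EReal) (x v : En n) : Prop :=
  ∀ ε : ℝ, 0 < ε → ∀ᶠ y in nhds x,
    g x + ((inner ℝ v (y - x) - ε * ‖y - x‖ : ℝ) : EReal) ≤ g y

/-- `v` is a Fréchet subgradient of the real-valued `g` at `x`. -/
def FSubR {n : ℕ} (g : En n → ℝ) (x v : En n) : Prop :=
  ∀ ε : ℝ, 0 < ε → ∀ᶠ y in nhds x,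
    g x + (inner ℝ v (y - x) : ℝ) - ε * ‖y - x‖ ≤ g y

/-- Moreau envelope of an extended-real-valued function. -/
def moreauE {n : ℕ} (g : En n → EReal) (μ : ℝ) (y : En n) : EReal :=
  ⨅ z, g z + (((1 / (2 * μ)) * ‖z - y‖ ^ 2 : ℝ) : EReal)

/-- Moreau envelope of a real-valued function. -/
def moreauR {n : ℕ} (g : En n → ℝ) (μ : ℝ) (y : En n) : ℝ :=
  ⨅ z, (g z + (1 / (2 * μ)) * ‖z - y‖ ^ 2)

/-- `p` is a proximal point of the extended-real-valued `g` with parameter `μ` at `y`,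
i.e. a minimizer of `z ↦ g z + (1/(2μ))‖z - y‖²`. -/
def IsProxPtE {n : ℕ} (g : En n → EReal) (μ : ℝ) (y p : En n) : Prop :=
  ∀ z, g p + (((1 / (2 * μ)) * ‖p - y‖ ^ 2 : ℝ) : EReal)
      ≤ g z + (((1 / (2 * μ)) * ‖z - y‖ ^ 2 : ℝ) : EReal)

/-- `p` is a proximal point of the real-valued `g` with parameter `μ` at `y`. -/
def IsProxPtR {n : ℕ} (g : En n → ℝ) (μ : ℝ) (y p : En n) : Prop :=
  ∀ z, g p + (1 / (2 * μ)) * ‖p - y‖ ^ 2 ≤ g z + (1 / (2 * μ)) * ‖z - y‖ ^ 2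

/-- `L`-Lipschitz continuity of a real-valued function. -/
def LipschitzR {n : ℕ} (L : ℝ) (g : En n → ℝ) : Prop := ∀ x y, |g x - g y| ≤ L * ‖x - y‖

/-- `L`-Lipschitz continuity of a map between Euclidean spaces. -/
def LipschitzMap {n m : ℕ} (L : ℝ) (f : En n → En m) : Prop :=
  ∀ x y, ‖f x - f y‖ ≤ L * ‖x - y‖

/-!
The prox objective `z ↦ g z + ‖z - x‖² / (2μ)` is `(1/μ - ρ)`-strongly convex, so it grows
quadratically away from its minimizer `u`. Adding these growth inequalities at prox points `u`, `v`
of `x`, `y` gives `(1 - ρμ) ‖u - v‖² ≤ ⟪x - y, u - v⟫`, from which the bound on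
`‖(x - y) - (u - v)‖` is elementary.
-/

open RealInnerProductSpace

section InnerProductSpace

variable {E : Type*} [NormedAddCommGroup E] [InnerProductSpace ℝ E]

lemma norm_smul_add_one_sub_smul_sq (x y : E) (t : ℝ) :
    ‖t • x + (1 - t) • y‖ ^ 2
      = t * ‖x‖ ^ 2 + (1 - t) * ‖y‖ ^ 2 - t * (1 - t) * ‖x - y‖ ^ 2 := by
  rw [norm_add_sq_real, norm_sub_sq_real, norm_smul, norm_smul, real_inner_smul_left,
    real_inner_smul_right, mul_pow, mul_pow, Real.norm_eq_abs, Real.norm_eq_abs, sq_abs, sq_abs]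
  ring

lemma norm_sub_le_max_mul_of_mul_norm_sq_le_inner {a d : E} {c : ℝ} (hc : 0 < c)
    (h : c * ‖d‖ ^ 2 ≤ ⟪a, d⟫) : ‖a - d‖ ≤ max 1 ((1 - c) / c) * ‖a‖ := by
  have hsq : ‖a - d‖ ^ 2 ≤ ‖a‖ ^ 2 + (1 - 2 * c) * ‖d‖ ^ 2 := by
    rw [norm_sub_sq_real]; linarith
  rcases le_or_gt (1 / 2) c with hc2 | hc2
  · have hle : ‖a - d‖ ≤ ‖a‖ :=
      le_of_pow_le_pow_left₀ two_ne_zero (norm_nonneg a) (by nlinarith [sq_nonneg ‖d‖])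
    nlinarith [le_max_left 1 ((1 - c) / c), norm_nonneg a]
  · have hcd : c * ‖d‖ ≤ ‖a‖ := by
      rcases (norm_nonneg d).eq_or_lt with hd | hd
      · rw [← hd, mul_zero]; exact norm_nonneg a
      · nlinarith [real_inner_le_norm a d]
    have hle : c * ‖a - d‖ ≤ (1 - c) * ‖a‖ := by
      refine le_of_pow_le_pow_left₀ two_ne_zero (by nlinarith [norm_nonneg a]) ?_
      nlinarith [mul_le_mul_of_nonneg_left hsq (sq_nonneg c),
        mul_self_le_mul_self (by positivity) hcd]
    calc ‖a - d‖ ≤ (1 - c) / c * ‖a‖ := by rw [div_mul_eq_mul_div, le_div_iff₀ hc]; linarith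
      _ ≤ max 1 ((1 - c) / c) * ‖a‖ := by gcongr; exact le_max_right _ _

end InnerProductSpace

lemma le_of_forall_add_one_sub_mul_le {a b c : ℝ}
    (h : ∀ t ∈ Ioo (0 : ℝ) 1, a + (1 - t) * c ≤ b) : a + c ≤ b := by
  have hlim : Tendsto (fun t : ℝ => a + (1 - t) * c) (nhdsWithin 0 (Ioi 0)) (nhds (a + c)) := by
    have : Continuous fun t : ℝ => a + (1 - t) * c := by fun_prop
    simpa using (this.tendsto 0).mono_left nhdsWithin_le_nhds
  exact le_of_tendsto hlim (eventually_of_mem (Ioo_mem_nhdsGT one_pos) h)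

variable {n : ℕ} {g : En n → EReal}

lemma WeaklyConvexE.le_coe {ρ : ℝ} (hwc : WeaklyConvexE ρ g) {x y : En n} {a b : ℝ}
    (ha : g x = a) (hb : g y = b) {t : ℝ} (ht₀ : 0 ≤ t) (ht₁ : t ≤ 1) :
    g (t • x + (1 - t) • y)
      ≤ ((t * a + (1 - t) * b + ρ / 2 * (t * (1 - t) * ‖x - y‖ ^ 2) : ℝ) : EReal) := by
  have h : g (t • x + (1 - t) • y) + ((ρ / 2 * ‖t • x + (1 - t) • y‖ ^ 2 : ℝ) : EReal)
      ≤ ((t * (a + ρ / 2 * ‖x‖ ^ 2) + (1 - t) * (b + ρ / 2 * ‖y‖ ^ 2) : ℝ) : EReal) := by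
    have h := hwc x y t ht₀ ht₁
    rwa [ha, hb, ← EReal.coe_add, ← EReal.coe_add, ← EReal.coe_mul, ← EReal.coe_mul,
      ← EReal.coe_add] at h
  induction hgw : g (t • x + (1 - t) • y) with
  | bot => exact bot_le
  | top => rw [hgw, EReal.top_add_coe] at h; exact absurd h (EReal.coe_lt_top _).not_ge
  | coe r =>
    rw [hgw, norm_smul_add_one_sub_smul_sq] at h
    norm_cast at h ⊢
    linarith

lemma IsProxPtE.exists_eq_coe {μ : ℝ} (hproper : ProperFn g) {y p : En n}
    (hp : IsProxPtE g μ y p) : ∃ a : ℝ, g p = a := by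
  obtain ⟨hbot, z, hz⟩ := hproper
  refine ⟨(g p).toReal, (EReal.coe_toReal (fun htop => ?_) (hbot p)).symm⟩
  have h := hp z
  rw [htop, ← EReal.coe_toReal hz (hbot z), EReal.top_add_coe, ← EReal.coe_add] at h
  exact (EReal.coe_lt_top _).not_ge h

lemma IsProxPtE.quadratic_growth {ρ μ : ℝ} (hwc : WeaklyConvexE ρ g) {x u v : En n}
    (hu : IsProxPtE g μ x u) {a b : ℝ} (ha : g u = a) (hb : g v = b) :
    a + 1 / (2 * μ) * ‖u - x‖ ^ 2 + (1 / μ - ρ) / 2 * ‖v - u‖ ^ 2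
      ≤ b + 1 / (2 * μ) * ‖v - x‖ ^ 2 := by
  refine le_of_forall_add_one_sub_mul_le fun t ⟨ht₀, ht₁⟩ => ?_
  have hw : ‖(t • v + (1 - t) • u) - x‖ ^ 2
      = t * ‖v - x‖ ^ 2 + (1 - t) * ‖u - x‖ ^ 2 - t * (1 - t) * ‖v - u‖ ^ 2 := by
    rw [← sub_sub_sub_cancel_right v u x, ← norm_smul_add_one_sub_smul_sq]
    congr 2
    module
  have hmin := (hu (t • v + (1 - t) • u)).trans
    (add_le_add_left (hwc.le_coe hb ha ht₀.le ht₁.le) _)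
  rw [ha, ← EReal.coe_add, ← EReal.coe_add, EReal.coe_le_coe_iff, hw] at hmin
  refine le_of_mul_le_mul_left ?_ ht₀
  linear_combination hmin

lemma IsProxPtE.mul_norm_sub_sq_le_inner {ρ μ : ℝ} (hμ : 0 < μ) (hproper : ProperFn g)
    (hwc : WeaklyConvexE ρ g) {x y u v : En n} (hu : IsProxPtE g μ x u)
    (hv : IsProxPtE g μ y v) : (1 - ρ * μ) * ‖u - v‖ ^ 2 ≤ ⟪x - y, u - v⟫ := by
  obtain ⟨a, ha⟩ := hu.exists_eq_coe hproper
  obtain ⟨b, hb⟩ := hv.exists_eq_coe hproper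
  have hxu := hu.quadratic_growth hwc ha hb
  have hyv := hv.quadratic_growth hwc hb ha
  rw [norm_sub_rev v u] at hxu
  have hpar :
      ‖v - x‖ ^ 2 + ‖u - y‖ ^ 2 - ‖u - x‖ ^ 2 - ‖v - y‖ ^ 2 = 2 * ⟪x - y, u - v⟫ := by
    simp only [norm_sub_sq_real, inner_sub_left, inner_sub_right, real_inner_comm x,
      real_inner_comm y]
    ring
  have hsum : (1 / μ - ρ) * ‖u - v‖ ^ 2 ≤ 1 / μ * ⟪x - y, u - v⟫ := by
    linear_combination hxu + hyv + 1 / (2 * μ) * hpar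
  calc (1 - ρ * μ) * ‖u - v‖ ^ 2 = μ * ((1 / μ - ρ) * ‖u - v‖ ^ 2) := by field_simp
    _ ≤ μ * (1 / μ * ⟪x - y, u - v⟫) := by gcongr
    _ = ⟪x - y, u - v⟫ := by field_simp

theorem moreau_envelope_gradient_lipschitz_general {n : ℕ} (ρ μ : ℝ)
    (hρ : 0 < ρ) (hμ : 0 < μ) (hμρ : μ < ρ⁻¹)
    (g : En n → EReal) (hproper : ProperFn g) (hwc : WeaklyConvexE ρ g)
    (p : En n → En n) (hp : ∀ y, IsProxPtE g μ y (p y)) :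
    LipschitzMap (max μ⁻¹ (ρ / (1 - ρ * μ))) (fun y => (1 / μ) • (y - p y)) := by
  intro x y
  have hc : 0 < 1 - ρ * μ := sub_pos.2 ((lt_inv_mul_iff₀ hρ).1 (by rwa [mul_one]))
  have hmono := (hp x).mul_norm_sub_sq_le_inner hμ hproper hwc (hp y)
  have hlip := norm_sub_le_max_mul_of_mul_norm_sq_le_inner hc hmono
  calc ‖(1 / μ) • (x - p x) - (1 / μ) • (y - p y)‖ = μ⁻¹ * ‖(x - y) - (p x - p y)‖ := by
        rw [← smul_sub, norm_smul, Real.norm_of_nonneg (by positivity), one_div,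
          sub_sub_sub_comm]
    _ ≤ μ⁻¹ * (max 1 ((1 - (1 - ρ * μ)) / (1 - ρ * μ)) * ‖x - y‖) := by gcongr
    _ = max μ⁻¹ (ρ / (1 - ρ * μ)) * ‖x - y‖ := by
        rw [← mul_assoc, mul_max_of_nonneg _ _ (by positivity), mul_one]
        congr 2
        field_simp
        ring

/-- the gradient `∇g_μ = (id - prox_{μg})/μ` of the Moreau envelope is
Lipschitz continuous with constant `max{μ⁻¹, ρ/(1 - ρμ)}`. -/
theorem moreau_envelope_gradient_lipschitz {n : ℕ} (ρ μ : ℝ)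
    (hρ : 0 < ρ) (hμ : 0 < μ) (hμρ : μ < ρ⁻¹)
    (g : En n → EReal) (hproper : ProperFn g) (hwc : WeaklyConvexE ρ g)
    (hlsc : LowerSemicontinuous g)
    (p : En n → En n) (hp : ∀ y, IsProxPtE g μ y (p y)) :
    LipschitzMap (max μ⁻¹ (ρ / (1 - ρ * μ))) (fun y => (1 / μ) • (y - p y)) :=
  moreau_envelope_gradient_lipschitz_general ρ μ hρ hμ hμρ g hproper hwc p hp
end
end

section
/- Let g: ℝⁿ → ℝ̄ be proper, closed, and ρ-weakly convex, and let 0 < μ₂ ≤ μ₁ < ρ⁻¹. Then for all y, g_{μ₂}(y) ≤ g_{μ₁}(y) + (1/2)·((μ₁ − μ₂)/μ₂)·μ₁·‖∇g_{μ₁}(y)‖². -/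
/-! Test the `μ₂`-envelope at the `μ₁`-proximal point `p`: this gives
`g_{μ₂}(y) ≤ g p + ‖p - y‖²/(2μ₂) = g_{μ₁}(y) + (1/(2μ₂) - 1/(2μ₁)) ‖p - y‖²`,
and `y - p = μ₁ ∇g_{μ₁}(y)`. -/

noncomputable section
open Filter Metric Set

theorem moreauE_le {n : ℕ} (g : En n → EReal) (μ : ℝ) (y z : En n) :
    moreauE g μ y ≤ g z + (((1 / (2 * μ)) * ‖z - y‖ ^ 2 : ℝ) : EReal) :=
  iInf_le (fun z => g z + (((1 / (2 * μ)) * ‖z - y‖ ^ 2 : ℝ) : EReal)) z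

theorem IsProxPtE.moreauE_eq {n : ℕ} {g : En n → EReal} {μ : ℝ} {y p : En n}
    (hp : IsProxPtE g μ y p) :
    moreauE g μ y = g p + (((1 / (2 * μ)) * ‖p - y‖ ^ 2 : ℝ) : EReal) :=
  le_antisymm (moreauE_le g μ y p) (le_iInf hp)

theorem inv_two_mul_sq_eq_add {E : Type*} [NormedAddCommGroup E] [NormedSpace ℝ E]
    {μ₁ μ₂ : ℝ} (hμ₁ : μ₁ ≠ 0) (hμ₂ : μ₂ ≠ 0) (y p : E) :
    1 / (2 * μ₂) * ‖p - y‖ ^ 2 =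
      1 / (2 * μ₁) * ‖p - y‖ ^ 2 + 1 / 2 * ((μ₁ - μ₂) / μ₂) * μ₁ * ‖(1 / μ₁) • (y - p)‖ ^ 2 := by
  rw [norm_smul, norm_sub_rev, mul_pow, Real.norm_eq_abs, sq_abs]
  field_simp
  ring

theorem moreau_envelope_parameter_comparison_general {n : ℕ} (μ₁ μ₂ : ℝ)
    (hμ₂ : 0 < μ₂) (hμ₂₁ : μ₂ ≤ μ₁)
    (g : En n → EReal)
    (y p : En n) (hp : IsProxPtE g μ₁ y p) :
    moreauE g μ₂ y ≤
      moreauE g μ₁ y +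
        ((1 / 2 * ((μ₁ - μ₂) / μ₂) * μ₁ * ‖(1 / μ₁) • (y - p)‖ ^ 2 : ℝ) : EReal) := by
  have hμ₁ : μ₁ ≠ 0 := (hμ₂.trans_le hμ₂₁).ne'
  calc moreauE g μ₂ y ≤ g p + (((1 / (2 * μ₂)) * ‖p - y‖ ^ 2 : ℝ) : EReal) :=
        moreauE_le g μ₂ y p
    _ = moreauE g μ₁ y +
        ((1 / 2 * ((μ₁ - μ₂) / μ₂) * μ₁ * ‖(1 / μ₁) • (y - p)‖ ^ 2 : ℝ) : EReal) := by
      rw [inv_two_mul_sq_eq_add hμ₁ hμ₂.ne', EReal.coe_add, ← add_assoc, hp.moreauE_eq]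

/-- comparison of Moreau envelopes for two smoothing parameters
`0 < μ₂ ≤ μ₁ < ρ⁻¹`, in terms of `∇g_{μ₁}(y) = (y - prox_{μ₁ g}(y))/μ₁`. -/
theorem moreau_envelope_parameter_comparison {n : ℕ} (ρ μ₁ μ₂ : ℝ)
    (hρ : 0 < ρ) (hμ₂ : 0 < μ₂) (hμ₂₁ : μ₂ ≤ μ₁) (hμ₁ρ : μ₁ < ρ⁻¹)
    (g : En n → EReal) (hproper : ProperFn g) (hlsc : LowerSemicontinuous g)
    (hwc : WeaklyConvexE ρ g)
    (y p : En n) (hp : IsProxPtE g μ₁ y p) :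
    moreauE g μ₂ y ≤
      moreauE g μ₁ y +
        ((1 / 2 * ((μ₁ - μ₂) / μ₂) * μ₁ * ‖(1 / μ₁) • (y - p)‖ ^ 2 : ℝ) : EReal) :=
  moreau_envelope_parameter_comparison_general μ₁ μ₂ hμ₂ hμ₂₁ g y p hp
end
end

section
/- Let g: ℝⁿ → ℝ be proper, closed, ρ-weakly convex and L_g-Lipschitz continuous, and let 0 < μ₂ ≤ μ₁ < ρ⁻¹. Then g_{μ₂}(y) ≤ g_{μ₁}(y) + (1/2)·((μ₁ − μ₂)/μ₂)·μ₁·L_g² for all y. -/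
noncomputable section
open Filter Metric Set

section QuadraticPenalty

variable {E : Type*} [SeminormedAddCommGroup E] {g : E → ℝ} {K : NNReal}

theorem LipschitzWith.bddBelow_range_add_mul_norm_sub_sq (hg : LipschitzWith K g) {a : ℝ}
    (ha : 0 < a) (y : E) : BddBelow (range fun z => g z + a * ‖z - y‖ ^ 2) := by
  refine ⟨g y - K ^ 2 / (4 * a), ?_⟩
  rintro _ ⟨z, rfl⟩
  have hgz : g y ≤ g z + K * ‖z - y‖ := by simpa [dist_eq_norm'] using hg.le_add_mul y z
  have hsq := sq_nonneg ((K : ℝ) - 2 * a * ‖z - y‖)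
  have hK : (K : ℝ) ^ 2 / (4 * a) * (4 * a) = K ^ 2 := div_mul_cancel₀ _ (by positivity)
  nlinarith

/-- `w` is `z` pulled back along the segment `[y, z]` into the closed ball of radius
`r = K / (2 a₁)` about `y`. If `d = ‖z - y‖ > r`, the Lipschitz loss `K (d - r)` is covered by
the quadratic saving `a₁ (d² - r²)` because `K = 2 a₁ r ≤ a₁ (d + r)`. -/
theorem LipschitzWith.exists_add_mul_norm_sub_sq_le [NormedSpace ℝ E] (hg : LipschitzWith K g)
    {a₁ a₂ : ℝ} (ha₁ : 0 < a₁) (ha : a₁ ≤ a₂) (y z : E) :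
    ∃ w, g w + a₂ * ‖w - y‖ ^ 2 ≤ g z + a₁ * ‖z - y‖ ^ 2 + (a₂ - a₁) * (K / (2 * a₁)) ^ 2 := by
  set r : ℝ := K / (2 * a₁) with hr_def
  obtain ⟨d, hd_def⟩ : ∃ d, ‖z - y‖ = d := ⟨_, rfl⟩
  rw [hd_def]
  have hr : 0 ≤ r := by positivity
  have hK : (K : ℝ) = 2 * a₁ * r := by rw [hr_def]; field_simp
  rcases le_or_gt d r with hdr | hrd
  · refine ⟨z, ?_⟩
    rw [hd_def]
    have := mul_le_mul_of_nonneg_left (pow_le_pow_left₀ (hd_def ▸ norm_nonneg _) hdr 2)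
      (sub_nonneg.2 ha)
    linarith
  · have hd : 0 < d := hr.trans_lt hrd
    refine ⟨y + (r / d) • (z - y), ?_⟩
    have hwy : ‖y + (r / d) • (z - y) - y‖ = r := by
      rw [add_sub_cancel_left, norm_smul, Real.norm_of_nonneg (by positivity), hd_def]
      field_simp
    have hwz : ‖y + (r / d) • (z - y) - z‖ = d - r := by
      rw [show y + (r / d) • (z - y) - z = (1 - r / d) • (y - z) by module, norm_smul,
        Real.norm_of_nonneg (by rw [sub_nonneg, div_le_one hd]; exact hrd.le), norm_sub_rev,
        hd_def]
      field_simp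
    have hgw := hg.le_add_mul (y + (r / d) • (z - y)) z
    rw [dist_eq_norm, hwz] at hgw
    rw [hwy]
    nlinarith [mul_pos ha₁ (sub_pos.2 hrd)]

theorem LipschitzWith.iInf_add_mul_norm_sub_sq_le [NormedSpace ℝ E] (hg : LipschitzWith K g)
    {a₁ a₂ : ℝ} (ha₁ : 0 < a₁) (ha : a₁ ≤ a₂) (y : E) :
    ⨅ z, g z + a₂ * ‖z - y‖ ^ 2
      ≤ (⨅ z, g z + a₁ * ‖z - y‖ ^ 2) + (a₂ - a₁) * (K / (2 * a₁)) ^ 2 := by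
  have : Nonempty E := ⟨y⟩
  rw [← sub_le_iff_le_add]
  refine le_ciInf fun z => ?_
  obtain ⟨w, hw⟩ := hg.exists_add_mul_norm_sub_sq_le ha₁ ha y z
  have := ciInf_le (hg.bddBelow_range_add_mul_norm_sub_sq (ha₁.trans_le ha) y) w
  linarith

end QuadraticPenalty

theorem LipschitzR.lipschitzWith {n : ℕ} {L : ℝ} {g : En n → ℝ} (h : LipschitzR L g) :
    LipschitzWith (Real.nnabs L) g :=
  LipschitzWith.of_dist_le_mul fun x y => by
    rw [Real.dist_eq, dist_eq_norm, Real.coe_nnabs]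
    exact (h x y).trans (by gcongr; exact le_abs_self L)

theorem moreau_envelope_parameter_comparison_lipschitz_general {n : ℕ} (μ₁ μ₂ Lg : ℝ)
    (hμ₂ : 0 < μ₂) (hμ₂₁ : μ₂ ≤ μ₁)
    (g : En n → ℝ)
    (hLg : LipschitzR Lg g) (y : En n) :
    moreauR g μ₂ y ≤ moreauR g μ₁ y + 1 / 2 * ((μ₁ - μ₂) / μ₂) * μ₁ * Lg ^ 2 := by
  have hμ₁ : 0 < μ₁ := hμ₂.trans_le hμ₂₁
  have hcompare := hLg.lipschitzWith.iInf_add_mul_norm_sub_sq_le (a₁ := 1 / (2 * μ₁))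
    (a₂ := 1 / (2 * μ₂)) (by positivity) (by gcongr) y
  have hconst :
      (1 / (2 * μ₂) - 1 / (2 * μ₁)) * ((Real.nnabs Lg : ℝ) / (2 * (1 / (2 * μ₁)))) ^ 2
        = 1 / 2 * ((μ₁ - μ₂) / μ₂) * μ₁ * Lg ^ 2 := by
    rw [Real.coe_nnabs, div_pow, sq_abs]
    field_simp
  rwa [hconst] at hcompare

/-- Lipschitz version of the Moreau envelope comparison:
`g_{μ₂}(y) ≤ g_{μ₁}(y) + (1/2)((μ₁ - μ₂)/μ₂)μ₁ L_g²`. -/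
theorem moreau_envelope_parameter_comparison_lipschitz {n : ℕ} (ρ μ₁ μ₂ Lg : ℝ)
    (hρ : 0 < ρ) (hμ₂ : 0 < μ₂) (hμ₂₁ : μ₂ ≤ μ₁) (hμ₁ρ : μ₁ < ρ⁻¹)
    (g : En n → ℝ) (hlsc : LowerSemicontinuous g) (hwc : WeaklyConvexR ρ g)
    (hLg : LipschitzR Lg g) (y : En n) :
    moreauR g μ₂ y ≤ moreauR g μ₁ y + 1 / 2 * ((μ₁ - μ₂) / μ₂) * μ₁ * Lg ^ 2 :=
  moreau_envelope_parameter_comparison_lipschitz_general μ₁ μ₂ Lg hμ₂ hμ₂₁ g hLg y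
end
end

section
/- The minimax concave penalty r_{λ,θ}: ℝ → ℝ defined by r_{λ,θ}(x) = λ|x| − x²/(2θ) for |x| ≤ θλ and r_{λ,θ}(x) = θλ²/2 otherwise (λ, θ > 0) is θ⁻¹-weakly convex, i.e., x ↦ r_{λ,θ}(x) + x²/(2θ) is convex; moreover for 0 < γ < θ its proximal operator is prox_{γ r_{λ,θ}}(x) = 0 if |x| < γλ, (x − λγ·sgn(x))/(1 − γ/θ) if γλ ≤ |x| ≤ θλ, and x if |x| > θλ. -/
noncomputable section
open Filter Metric Set

/-- The minimax concave penalty (MCP). -/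
def mcp (lam θ : ℝ) (x : ℝ) : ℝ :=
  if |x| ≤ θ * lam then lam * |x| - x ^ 2 / (2 * θ) else θ * lam ^ 2 / 2

/-- The firm-thresholding formula, claimed to be `prox_{γ r_{λ,θ}}`. -/
def mcpProx (lam θ γ : ℝ) (x : ℝ) : ℝ :=
  if |x| < γ * lam then 0
  else if |x| ≤ θ * lam then (x - lam * γ * Real.sign x) / (1 - γ / θ)
  else x

/-!
With `g := r_{λ,θ} + (·)²/(2θ)` one has `g x = λ|x| + max (|x| - θλ) 0 ^ 2 / (2θ)`, a sum of
convex functions. For `γ < θ` the proximal objective `z ↦ r_{λ,θ} z + (z - x)²/(2γ)` is `g` plus a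
quadratic of curvature `1/γ - 1/θ > 0`. In each regime of the firm-thresholding formula,
`g` has at `p = mcpProx λ θ γ x` an explicit subgradient cancelling the slope of that quadratic
at `p`, so the objective exceeds its value at `p` by at least `(1/(2γ) - 1/(2θ)) (z - p)²`: this
gives minimality and uniqueness at once.
-/

namespace Real

lemma sign_mul_self_eq_abs (x : ℝ) : sign x * x = |x| := by
  rcases lt_trichotomy x 0 with hx | rfl | hx
  · rw [sign_of_neg hx, abs_of_neg hx]; ring
  · simp
  · rw [sign_of_pos hx, abs_of_pos hx, one_mul]

lemma abs_sign_of_ne_zero {x : ℝ} (hx : x ≠ 0) : |sign x| = 1 := by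
  rcases sign_apply_eq_of_ne_zero x hx with h | h <;> simp [h]

end Real

lemma convexOn_max_abs_sub_zero_sq (a : ℝ) :
    ConvexOn ℝ univ (fun x : ℝ => max (|x| - a) 0 ^ 2) := by
  have hmax : ConvexOn ℝ univ (fun x : ℝ => max (|x| - a) 0) :=
    (convexOn_univ_norm.sub (concaveOn_const a convex_univ)).sup (convexOn_const 0 convex_univ)
  exact hmax.pow (fun x _ => le_max_right _ _) 2

lemma prox_objective_quadratic_growth {f : ℝ → ℝ} {θ γ x p : ℝ}
    (hsub : ∀ z, f p + p ^ 2 / (2 * θ) + ((x - p) / γ + p / θ) * (z - p) ≤ f z + z ^ 2 / (2 * θ))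
    (z : ℝ) :
    f p + 1 / (2 * γ) * (p - x) ^ 2 + (1 / (2 * γ) - 1 / (2 * θ)) * (z - p) ^ 2
      ≤ f z + 1 / (2 * γ) * (z - x) ^ 2 := by
  linear_combination hsub z

lemma eq_of_forall_le_of_quadratic_growth {F : ℝ → ℝ} {c p w : ℝ} (hc : 0 < c)
    (hp : ∀ z, F p + c * (z - p) ^ 2 ≤ F z) (hw : ∀ z, F w ≤ F z) : w = p := by
  have hsq : c * (w - p) ^ 2 ≤ c * 0 := by linarith [hp w, hw p]
  have : (w - p) ^ 2 = 0 := le_antisymm (le_of_mul_le_mul_left hsq hc) (sq_nonneg _)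
  exact sub_eq_zero.1 (pow_eq_zero_iff two_ne_zero |>.1 this)

section MCP

variable {lam θ : ℝ}

lemma mcp_of_abs_le {x : ℝ} (hx : |x| ≤ θ * lam) :
    mcp lam θ x = lam * |x| - x ^ 2 / (2 * θ) :=
  if_pos hx

lemma mcp_of_le_abs (hθ : θ ≠ 0) {x : ℝ} (hx : θ * lam ≤ |x|) : mcp lam θ x = θ * lam ^ 2 / 2 := by
  rcases hx.lt_or_eq with hx | hx
  · exact if_neg hx.not_ge
  · rw [mcp_of_abs_le hx.ge, ← sq_abs x, ← hx]
    field_simp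
    ring

lemma mcp_add_sq_div_eq (hθ : θ ≠ 0) (x : ℝ) :
    mcp lam θ x + x ^ 2 / (2 * θ) = lam * |x| + max (|x| - θ * lam) 0 ^ 2 / (2 * θ) := by
  rcases le_total (|x|) (θ * lam) with hx | hx
  · rw [mcp_of_abs_le hx, max_eq_right (sub_nonpos.2 hx)]
    ring
  · rw [mcp_of_le_abs hθ hx, max_eq_left (sub_nonneg.2 hx), sub_sq, sq_abs]
    field_simp
    ring

lemma convexOn_mcp_add_sq_div (hlam : 0 ≤ lam) (hθ : 0 < θ) :
    ConvexOn ℝ univ (fun x => mcp lam θ x + x ^ 2 / (2 * θ)) := by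
  simp_rw [mcp_add_sq_div_eq hθ.ne', div_eq_inv_mul _ (2 * θ)]
  exact ((convexOn_univ_norm (E := ℝ)).smul hlam).add
    ((convexOn_max_abs_sub_zero_sq (θ * lam)).smul (by positivity))

lemma mcp_add_sq_div_subgradient_of_abs_le (hlam : 0 ≤ lam) (hθ : 0 < θ) {p σ : ℝ}
    (hp : |p| ≤ θ * lam) (hσ : |σ| ≤ 1) (hσp : σ * p = |p|) (z : ℝ) :
    mcp lam θ p + p ^ 2 / (2 * θ) + lam * σ * (z - p) ≤ mcp lam θ z + z ^ 2 / (2 * θ) := by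
  have hσz : σ * z ≤ |z| := (le_abs_self _).trans <| by
    simpa only [abs_mul] using mul_le_of_le_one_left (abs_nonneg z) hσ
  have hlin : lam * σ * (z - p) = lam * (σ * z) - lam * |p| := by rw [← hσp]; ring
  rw [mcp_add_sq_div_eq hθ.ne', mcp_add_sq_div_eq hθ.ne', max_eq_right (sub_nonpos.2 hp),
    zero_pow two_ne_zero, zero_div, add_zero, hlin]
  have : 0 ≤ max (|z| - θ * lam) 0 ^ 2 / (2 * θ) := by positivity
  linarith [mul_le_mul_of_nonneg_left hσz hlam]

lemma mcp_add_sq_div_subgradient_of_le_abs (hθ : 0 < θ) {p : ℝ} (hp : θ * lam ≤ |p|) (z : ℝ) :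
    mcp lam θ p + p ^ 2 / (2 * θ) + p / θ * (z - p) ≤ mcp lam θ z + z ^ 2 / (2 * θ) := by
  rw [mcp_of_le_abs hθ.ne' hp, ← sub_nonneg]
  rcases le_total (|z|) (θ * lam) with hz | hz
  · have key : 0 ≤ 2 * θ * lam * |z| - 2 * p * z + p ^ 2 - θ ^ 2 * lam ^ 2 := by
      nlinarith [mul_nonneg (sub_nonneg.2 hp) (by linarith : 0 ≤ |p| + θ * lam - 2 * |z|),
        sq_abs p, le_abs_self (p * z), abs_mul p z]
    rw [mcp_of_abs_le hz]
    have : (lam * |z| - z ^ 2 / (2 * θ) + z ^ 2 / (2 * θ)) -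
        (θ * lam ^ 2 / 2 + p ^ 2 / (2 * θ) + p / θ * (z - p)) =
        (2 * θ * lam * |z| - 2 * p * z + p ^ 2 - θ ^ 2 * lam ^ 2) / (2 * θ) := by
      field_simp
      ring
    rw [this]
    positivity
  · rw [mcp_of_le_abs hθ.ne' hz]
    have : (θ * lam ^ 2 / 2 + z ^ 2 / (2 * θ)) -
        (θ * lam ^ 2 / 2 + p ^ 2 / (2 * θ) + p / θ * (z - p)) = (z - p) ^ 2 / (2 * θ) := by
      field_simp
      ring
    rw [this]
    positivity

lemma mcp_add_sq_div_subgradient_scaled_softThreshold (hlam : 0 ≤ lam) (hθ : 0 < θ) {γ x : ℝ}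
    (hγ : 0 < γ) (hγθ : γ < θ) (hx₀ : x ≠ 0) (hxγ : γ * lam ≤ |x|) (hxθ : |x| ≤ θ * lam) (z : ℝ) :
    let p := (x - lam * γ * Real.sign x) / (1 - γ / θ)
    mcp lam θ p + p ^ 2 / (2 * θ) + ((x - p) / γ + p / θ) * (z - p)
      ≤ mcp lam θ z + z ^ 2 / (2 * θ) := by
  set σ := Real.sign x
  intro p
  have hσ : |σ| = 1 := Real.abs_sign_of_ne_zero hx₀
  have hσsq : σ ^ 2 = 1 := by rw [← sq_abs, hσ, one_pow]
  have hD : 0 < 1 - γ / θ := by rw [sub_pos, div_lt_one hθ]; exact hγθ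
  have hσp : σ * p = (|x| - lam * γ) / (1 - γ / θ) := by
    have : σ * p = (σ * x - lam * γ * σ ^ 2) / (1 - γ / θ) := by simp only [p]; ring
    rw [this, hσsq, mul_one, Real.sign_mul_self_eq_abs]
  have hpabs : |p| = σ * p := by
    have : 0 ≤ σ * p := hσp ▸ div_nonneg (by linarith) hD.le
    rw [← one_mul (|p|), ← hσ, ← abs_mul, abs_of_nonneg this]
  have hp : |p| ≤ θ * lam := by
    rw [hpabs, hσp, div_le_iff₀ hD]
    field_simp
    nlinarith
  have hs : (x - p) / γ + p / θ = lam * σ := calc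
    _ = (x - p * (1 - γ / θ)) / γ := by field_simp; ring
    _ = lam * σ := by rw [div_mul_cancel₀ _ hD.ne']; field_simp; ring
  rw [hs]
  exact mcp_add_sq_div_subgradient_of_abs_le hlam hθ hp hσ.le hpabs.symm z

lemma mcp_add_sq_div_subgradient_mcpProx (hlam : 0 < lam) (hθ : 0 < θ) {γ : ℝ} (hγ : 0 < γ)
    (hγθ : γ < θ) (x z : ℝ) :
    mcp lam θ (mcpProx lam θ γ x) + mcpProx lam θ γ x ^ 2 / (2 * θ)
        + ((x - mcpProx lam θ γ x) / γ + mcpProx lam θ γ x / θ) * (z - mcpProx lam θ γ x)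
      ≤ mcp lam θ z + z ^ 2 / (2 * θ) := by
  unfold mcpProx
  split_ifs with hsmall hmid
  · have hσ : |x / (γ * lam)| ≤ 1 := by
      rw [abs_div, abs_of_pos (mul_pos hγ hlam), div_le_one (mul_pos hγ hlam)]
      exact hsmall.le
    have hs : (x - 0) / γ + 0 / θ = lam * (x / (γ * lam)) := by
      field_simp
      ring
    rw [hs]
    exact mcp_add_sq_div_subgradient_of_abs_le hlam.le hθ (by rw [abs_zero]; positivity) hσ
      (by simp) z
  · have hx₀ : x ≠ 0 := by
      rintro rfl
      exact hsmall (by rw [abs_zero]; positivity)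
    exact mcp_add_sq_div_subgradient_scaled_softThreshold hlam.le hθ hγ hγθ hx₀ (not_lt.1 hsmall)
      hmid z
  · have hs : (x - x) / γ + x / θ = x / θ := by ring
    rw [hs]
    exact mcp_add_sq_div_subgradient_of_le_abs hθ (not_le.1 hmid).le z

end MCP

/-- the MCP is `θ⁻¹`-weakly convex, and for `0 < γ < θ` its proximal
operator is given by the firm-thresholding formula: `mcpProx lam θ γ x` is the
unique minimizer of `z ↦ r_{λ,θ}(z) + (1/(2γ))(z - x)²`. -/
theorem mcp_weakly_convex_and_prox (lam θ : ℝ) (hlam : 0 < lam) (hθ : 0 < θ) :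
    ConvexOn ℝ Set.univ (fun x => mcp lam θ x + x ^ 2 / (2 * θ)) ∧
      ∀ γ : ℝ, 0 < γ → γ < θ → ∀ x : ℝ,
        (∀ z : ℝ,
          mcp lam θ (mcpProx lam θ γ x) + 1 / (2 * γ) * (mcpProx lam θ γ x - x) ^ 2
            ≤ mcp lam θ z + 1 / (2 * γ) * (z - x) ^ 2) ∧
        ∀ w : ℝ,
          (∀ z : ℝ, mcp lam θ w + 1 / (2 * γ) * (w - x) ^ 2
              ≤ mcp lam θ z + 1 / (2 * γ) * (z - x) ^ 2) →
            w = mcpProx lam θ γ x := by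
  refine ⟨convexOn_mcp_add_sq_div hlam.le hθ, fun γ hγ hγθ x => ?_⟩
  have hc : 0 < 1 / (2 * γ) - 1 / (2 * θ) :=
    sub_pos.2 (one_div_lt_one_div_of_lt (by positivity) (by linarith))
  have hgrowth := prox_objective_quadratic_growth
    (mcp_add_sq_div_subgradient_mcpProx hlam hθ hγ hγθ x)
  exact ⟨fun z => (le_add_of_nonneg_right (mul_nonneg hc.le (sq_nonneg _))).trans (hgrowth z),
    fun w hw => eq_of_forall_le_of_quadratic_growth
      (F := fun z => mcp lam θ z + 1 / (2 * γ) * (z - x) ^ 2) hc hgrowth hw⟩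
end
end
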